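/- Let m be a positive natural number and let V be an affine subspace of ℝ^m that is the affine span (over ℝ) of a set of points all of whose coordinates are rational. Then the set of points of V with all coordinates rational is dense in V (with respect to the subspace topology induced from ℝ^m). -/
import Mathlib

theorem stmt9 (m : ℕ) (hm : 0 < m) (s : Set (Fin m → ℝ))
    (hs : ∀ p ∈ s, ∀ i, ∃ q : ℚ, p i = (q : ℝ)) :
    (affineSpan ℝ s : Set (Fin m → ℝ)) ⊆
      closure {p : Fin m → ℝ | p ∈ affineSpan ℝ s ∧ ∀ i, ∃ q : ℚ, p i = (q : ℝ)} := by
  classical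
  intro x hx
  have hsne : s.Nonempty := by
    by_contra h
    rw [Set.not_nonempty_iff_eq_empty] at h
    subst h
    simp only [AffineSubspace.span_empty, AffineSubspace.bot_coe,
      Set.mem_empty_iff_false] at hx
  obtain ⟨p₀, hp₀⟩ := hsne
  -- express x as an affine combination of points of s
  have hx' : x ∈ affineSpan ℝ (Set.range (Subtype.val : s → (Fin m → ℝ))) := by
    rwa [Subtype.range_coe]
  obtain ⟨fs, w, hw, hxw⟩ := eq_affineCombination_of_mem_affineSpan hx'
  have hxsum : x = ∑ i ∈ fs, w i • (i : Fin m → ℝ) := by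
    rw [hxw, Finset.affineCombination_eq_linear_combination _ _ _ hw]
  -- the continuous parametrization
  set f : (↥s → ℝ) → (Fin m → ℝ) :=
    fun c => p₀ + ∑ i ∈ fs, c i • ((i : Fin m → ℝ) - p₀) with hf
  have hfc : Continuous f :=
    continuous_const.add (continuous_finset_sum _ fun i _ =>
      (continuous_apply i).smul continuous_const)
  -- f maps rational coefficient vectors into the target set
  set D : Set (↥s → ℝ) := Set.pi Set.univ fun _ => Set.range ((↑) : ℚ → ℝ) with hD
  have hDdense : Dense D := dense_pi Set.univ fun _ _ => Rat.denseRange_cast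
  have himg : f '' D ⊆
      {p : Fin m → ℝ | p ∈ affineSpan ℝ s ∧ ∀ i, ∃ q : ℚ, p i = (q : ℝ)} := by
    rintro _ ⟨c, hc, rfl⟩
    constructor
    · -- membership in the affine span
      have hv : (∑ i ∈ fs, c i • ((i : Fin m → ℝ) - p₀)) ∈ (affineSpan ℝ s).direction := by
        rw [direction_affineSpan]
        refine Submodule.sum_mem _ fun i _ => Submodule.smul_mem _ _ ?_
        have := vsub_mem_vectorSpan ℝ i.2 hp₀
        simpa [vsub_eq_sub] using this
      have := AffineSubspace.vadd_mem_of_mem_direction hv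
        (mem_affineSpan ℝ hp₀ : p₀ ∈ affineSpan ℝ s)
      simpa [hf, vadd_eq_add, add_comm] using this
    · -- rationality of coordinates
      intro j
      have hK : ∀ y : ℝ, (∃ q : ℚ, y = (q : ℝ)) ↔ y ∈ (Rat.castHom ℝ).range := by
        intro y
        simp only [RingHom.mem_range, Rat.coe_castHom]
        exact ⟨fun ⟨q, h⟩ => ⟨q, h.symm⟩, fun ⟨q, h⟩ => ⟨q, h.symm⟩⟩
      rw [hK]
      have hfj : f c j = p₀ j + ∑ i ∈ fs, c i * ((i : Fin m → ℝ) j - p₀ j) := by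
        simp [hf, Finset.sum_apply]
      rw [hfj]
      have hp₀j : p₀ j ∈ (Rat.castHom ℝ).range := by
        rw [← hK]; exact hs p₀ hp₀ j
      refine add_mem hp₀j (Subring.sum_mem _ fun i _ => mul_mem ?_ (sub_mem ?_ hp₀j))
      · rw [← hK]
        obtain ⟨q, hq⟩ := hc i (Set.mem_univ i)
        exact ⟨q, hq.symm⟩
      · rw [← hK]; exact hs _ i.2 j
  -- x = f w
  have hxf : f (fun i => w i) = x := by
    have : f (fun i => w i)
        = p₀ + ((∑ i ∈ fs, w i • (i : Fin m → ℝ)) - (∑ i ∈ fs, w i) • p₀) := by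
      simp [hf, smul_sub, Finset.sum_sub_distrib, Finset.sum_smul]
    rw [this, hw, one_smul, ← hxsum]
    abel
  have hcl : x ∈ closure (f '' D) := by
    rw [← hxf]
    exact image_closure_subset_closure_image hfc
      ⟨_, hDdense _, rfl⟩
  exact closure_mono himg hcl
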